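/- arXiv:0910.4226 — 5 statements merged into one kernel-verified Lean document; each statement's English description precedes it below -/
import Mathlib

section
/- Let T⁺ > T⁻ > 0 and L > 0 satisfy (T⁺ − T⁻)/L ≥ 4/(5π²). Then for all nonzero integers k₁, k₂ the discriminant Δ(k₁,k₂) := −4π²k₂²(T⁺ − T⁻)·((T⁺ − T⁻) − 4L/(π²(k₁² + 4k₂²))) satisfies Δ(k₁,k₂) ≤ 0. Hence, beyond this temperature-gradient threshold, no linearly growing Fourier mode exists in the bad-curvature region (linear H-mode stability). -/
open Real

/-- In the bad-curvature region, if the temperature gradient is at least the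
threshold `4/(5π²)`, then for every nonzero integer Fourier mode `k₁, k₂` the
discriminant is nonpositive: there is no linearly growing mode (H-mode). -/
theorem linear_stability_H_mode
    (Tp Tm L : ℝ) (hTm : 0 < Tm) (hT : Tm < Tp) (hL : 0 < L)
    (hgrad : 4 / (5 * Real.pi ^ 2) ≤ (Tp - Tm) / L) :
    ∀ k₁ k₂ : ℤ, k₁ ≠ 0 → k₂ ≠ 0 →
      -4 * Real.pi ^ 2 * (k₂ : ℝ) ^ 2 * (Tp - Tm) *
          ((Tp - Tm) - 4 * L / (Real.pi ^ 2 * ((k₁ : ℝ) ^ 2 + 4 * (k₂ : ℝ) ^ 2))) ≤ 0 := by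
  intro k₁ k₂ hk₁ hk₂
  have hpi := Real.pi_pos
  have h1 : (1 : ℝ) ≤ (k₁ : ℝ) ^ 2 := by
    have : (1 : ℤ) ≤ k₁ ^ 2 := by
      nlinarith [Int.one_le_abs hk₁, sq_abs k₁]
    exact_mod_cast this
  have h2 : (1 : ℝ) ≤ (k₂ : ℝ) ^ 2 := by
    have : (1 : ℤ) ≤ k₂ ^ 2 := by
      nlinarith [Int.one_le_abs hk₂, sq_abs k₂]
    exact_mod_cast this
  have hS : (5 : ℝ) ≤ (k₁ : ℝ) ^ 2 + 4 * (k₂ : ℝ) ^ 2 := by nlinarith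
  have hSpos : (0 : ℝ) < (k₁ : ℝ) ^ 2 + 4 * (k₂ : ℝ) ^ 2 := by linarith
  have hgrad' : 4 * L ≤ (Tp - Tm) * (5 * Real.pi ^ 2) := by
    rw [div_le_div_iff₀ (by positivity) hL] at hgrad
    linarith
  have hTd : (0 : ℝ) < Tp - Tm := by linarith
  have hkey : 4 * L / (Real.pi ^ 2 * ((k₁ : ℝ) ^ 2 + 4 * (k₂ : ℝ) ^ 2)) ≤ Tp - Tm := by
    rw [div_le_iff₀ (by positivity)]
    nlinarith [mul_le_mul_of_nonneg_left hS (mul_nonneg hTd.le (sq_nonneg Real.pi))]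
  have hA : (0 : ℝ) ≤ 4 * Real.pi ^ 2 * (k₂ : ℝ) ^ 2 * (Tp - Tm) := by positivity
  have hB : (0 : ℝ) ≤ (Tp - Tm) - 4 * L / (Real.pi ^ 2 * ((k₁ : ℝ) ^ 2 + 4 * (k₂ : ℝ) ^ 2)) := by
    linarith
  nlinarith [mul_nonneg hA hB]
end

section
/- Let T⁺ > T⁻ > 0, L > 0 and let k₁, k₂ be nonzero integers such that Δ := −4π²k₂²(T⁺ − T⁻)·((T⁺ − T⁻) − 4L/(π²(k₁² + 4k₂²))) > 0. Then the complex polynomial P(X) = X² + 2iπk₂(T⁺ + T⁻)X − 4π²k₂²T⁺T⁻ − (4k₂²L/(k₁² + 4k₂²))(T⁺ − T⁻) has a root with real part equal to −√Δ/2 and a root with real part equal to +√Δ/2; in particular P has a root with strictly negative real part (an exponentially growing mode for the evolution ∂ₜh + Mh = 0). -/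
/-!
Completing the square: the linear coefficient `2πi k₂ (T⁺ + T⁻)` of `P` is purely imaginary and
its discriminant is the real number `Δ`, so `P(s − iπk₂(T⁺ + T⁻)) = s² − Δ/4`. For `Δ > 0` the
roots are `±√Δ/2 − iπk₂(T⁺ + T⁻)`.
-/

open Real Complex

/-- The characteristic polynomial of the Fourier-mode system obtained by
linearizing the bi-temperature drift-fluid system around the bad-curvature
equilibrium `μ^{bad}`. -/
noncomputable def charPolyBad (Tp Tm L : ℝ) (k₁ k₂ : ℤ) (X : ℂ) : ℂ :=
  X ^ 2 + 2 * (Real.pi : ℂ) * Complex.I * (k₂ : ℂ) * ((Tp : ℂ) + (Tm : ℂ)) * X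
    - 4 * (Real.pi : ℂ) ^ 2 * (k₂ : ℂ) ^ 2 * ((Tp : ℂ) * (Tm : ℂ))
    - 4 * (k₂ : ℂ) ^ 2 * (L : ℂ) / ((k₁ : ℂ) ^ 2 + 4 * (k₂ : ℂ) ^ 2) * ((Tp : ℂ) - (Tm : ℂ))

noncomputable def discrBad (Tp Tm L : ℝ) (k₁ k₂ : ℤ) : ℝ :=
  -4 * π ^ 2 * (k₂ : ℝ) ^ 2 * (Tp - Tm) *
    ((Tp - Tm) - 4 * L / (π ^ 2 * ((k₁ : ℝ) ^ 2 + 4 * (k₂ : ℝ) ^ 2)))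

theorem charPolyBad_sub_mul_I (Tp Tm L : ℝ) (k₁ : ℤ) {k₂ : ℤ} (hk₂ : k₂ ≠ 0) (s : ℂ) :
    charPolyBad Tp Tm L k₁ k₂ (s - π * k₂ * (Tp + Tm) * I) =
      s ^ 2 - discrBad Tp Tm L k₁ k₂ / 4 := by
  have hk : (k₁ : ℂ) ^ 2 + 4 * (k₂ : ℂ) ^ 2 ≠ 0 := by
    exact_mod_cast (by positivity : (0 : ℝ) < (k₁ : ℝ) ^ 2 + 4 * (k₂ : ℝ) ^ 2).ne'
  have hπ : (π : ℂ) ≠ 0 := ofReal_ne_zero.mpr pi_ne_zero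
  unfold charPolyBad discrBad
  push_cast
  field_simp
  ring_nf
  simp only [I_sq]
  ring

theorem growing_mode_of_positive_discriminant_general
    (Tp Tm L : ℝ)
    (k₁ k₂ : ℤ) (hk₂ : k₂ ≠ 0) (Δ : ℝ)
    (hΔdef : Δ = -4 * Real.pi ^ 2 * (k₂ : ℝ) ^ 2 * (Tp - Tm) *
      ((Tp - Tm) - 4 * L / (Real.pi ^ 2 * ((k₁ : ℝ) ^ 2 + 4 * (k₂ : ℝ) ^ 2))))
    (hΔpos : 0 < Δ) :
    ∃ z₁ z₂ : ℂ,
      charPolyBad Tp Tm L k₁ k₂ z₁ = 0 ∧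
      charPolyBad Tp Tm L k₁ k₂ z₂ = 0 ∧
      z₁.re = -Real.sqrt Δ / 2 ∧
      z₂.re = Real.sqrt Δ / 2 ∧
      z₁.re < 0 := by
  have hroot : ∀ s : ℝ, s ^ 2 = Δ / 4 →
      charPolyBad Tp Tm L k₁ k₂ (s - π * k₂ * (Tp + Tm) * I) = 0 := by
    intro s hs
    rw [charPolyBad_sub_mul_I Tp Tm L k₁ hk₂, discrBad, ← hΔdef, ← ofReal_pow, hs]
    push_cast
    ring
  have hsq : √Δ ^ 2 = Δ := sq_sqrt hΔpos.le
  refine ⟨_, _, hroot (-√Δ / 2) (by rw [div_pow, neg_sq, hsq]; norm_num),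
    hroot (√Δ / 2) (by rw [div_pow, hsq]; norm_num), by simp, by simp, ?_⟩
  simp [neg_div, hΔpos]

/-- If the discriminant `Δ` of a Fourier mode `(k₁, k₂)` is strictly positive,
then the characteristic polynomial has a root with real part `−√Δ/2` and a root
with real part `+√Δ/2`; in particular it has a root with strictly negative
real part, i.e. an exponentially growing mode for `∂ₜ h + M h = 0`. -/
theorem growing_mode_of_positive_discriminant
    (Tp Tm L : ℝ) (hTm : 0 < Tm) (hT : Tm < Tp) (hL : 0 < L)
    (k₁ k₂ : ℤ) (hk₁ : k₁ ≠ 0) (hk₂ : k₂ ≠ 0) (Δ : ℝ)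
    (hΔdef : Δ = -4 * Real.pi ^ 2 * (k₂ : ℝ) ^ 2 * (Tp - Tm) *
      ((Tp - Tm) - 4 * L / (Real.pi ^ 2 * ((k₁ : ℝ) ^ 2 + 4 * (k₂ : ℝ) ^ 2))))
    (hΔpos : 0 < Δ) :
    ∃ z₁ z₂ : ℂ,
      charPolyBad Tp Tm L k₁ k₂ z₁ = 0 ∧
      charPolyBad Tp Tm L k₁ k₂ z₂ = 0 ∧
      z₁.re = -Real.sqrt Δ / 2 ∧
      z₂.re = Real.sqrt Δ / 2 ∧
      z₁.re < 0 :=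
  growing_mode_of_positive_discriminant_general Tp Tm L k₁ k₂ hk₂ Δ hΔdef hΔpos
end

section
/- Let x = (x₁, x₂) : ℝ → ℝ² and v = (v₁, v₂) : ℝ → ℝ² be differentiable functions satisfying the characteristic ODE system dx₁/dt = −v₁(v₂ − x₁), dx₂/dt = v₂(x₁ − v₂) − ½(v₁² + v₂²), dv₁/dt = v₂(v₂ − x₁), dv₂/dt = −v₁(v₂ − x₁). Then the quantity x₁(t) − v₂(t) is constant in time: x₁(t) − v₂(t) = x₁(0) − v₂(0) for all t ∈ ℝ. -/
theorem characteristic_invariant_x1_sub_v2_general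
    (x₁ v₁ v₂ : ℝ → ℝ)
    (hx₁ : ∀ t, HasDerivAt x₁ (-(v₁ t) * (v₂ t - x₁ t)) t)
    (hv₂ : ∀ t, HasDerivAt v₂ (-(v₁ t) * (v₂ t - x₁ t)) t) :
    ∀ t : ℝ, x₁ t - v₂ t = x₁ 0 - v₂ 0 := by
  have hderiv : ∀ t, HasDerivAt (x₁ - v₂) 0 t := fun t => by
    simpa only [sub_self] using (hx₁ t).sub (hv₂ t)
  exact fun t => is_const_of_deriv_eq_zero (fun t => (hderiv t).differentiableAt)
    (fun t => (hderiv t).deriv) t 0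

/-- Along the characteristics of the limiting gyrokinetic equation (without
electric field), the quantity `x₁ − v₂` is conserved. -/
theorem characteristic_invariant_x1_sub_v2
    (x₁ x₂ v₁ v₂ : ℝ → ℝ)
    (hx₁ : ∀ t, HasDerivAt x₁ (-(v₁ t) * (v₂ t - x₁ t)) t)
    (hx₂ : ∀ t, HasDerivAt x₂
      (v₂ t * (x₁ t - v₂ t) - (1 / 2) * ((v₁ t) ^ 2 + (v₂ t) ^ 2)) t)
    (hv₁ : ∀ t, HasDerivAt v₁ (v₂ t * (v₂ t - x₁ t)) t)
    (hv₂ : ∀ t, HasDerivAt v₂ (-(v₁ t) * (v₂ t - x₁ t)) t) :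
    ∀ t : ℝ, x₁ t - v₂ t = x₁ 0 - v₂ 0 :=
  characteristic_invariant_x1_sub_v2_general x₁ v₁ v₂ hx₁ hv₂
end

section
/- Let x = (x₁, x₂) : ℝ → ℝ² and v = (v₁, v₂) : ℝ → ℝ² be differentiable functions satisfying the characteristic ODE system dx₁/dt = −v₁(v₂ − x₁), dx₂/dt = v₂(x₁ − v₂) − ½(v₁² + v₂²), dv₁/dt = v₂(v₂ − x₁), dv₂/dt = −v₁(v₂ − x₁). Then for all t ∈ ℝ, x₂(t) + v₁(t) = x₂(0) + v₁(0) − (t/2)·(v₁(0)² + v₂(0)²). In other words, the motion in the e₂ direction is a periodic motion superposed with a uniform fall at speed ½|v(0)|² (the ∇B drift). -/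
/-!
The speed `|v|` is conserved, since `v` rotates with angular velocity `v₂ - x₁`. Along the
flow, `x₂ + v₁` then has derivative `-½|v|² = -½|v(0)|²`, so it falls linearly at that rate.
-/

section ConstantDerivative

variable {E : Type*} [NormedAddCommGroup E] [NormedSpace ℝ E]

theorem eq_of_hasDerivAt_zero {f : ℝ → E} (hf : ∀ t, HasDerivAt f 0 t) (s t : ℝ) :
    f s = f t :=
  is_const_of_deriv_eq_zero (fun t => (hf t).differentiableAt) (fun t => (hf t).deriv) s t

theorem eq_add_smul_of_hasDerivAt_const {f : ℝ → E} {c : E} (hf : ∀ t, HasDerivAt f c t)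
    (t : ℝ) : f t = f 0 + t • c := by
  have hconst : ∀ s, HasDerivAt (fun s => f s - s • c) 0 s := fun s =>
    ((hf s).sub ((hasDerivAt_id s).smul_const c)).congr_deriv (by simp)
  simpa [sub_eq_iff_eq_add, add_comm] using eq_of_hasDerivAt_zero hconst t 0

end ConstantDerivative

theorem sq_add_sq_eq_of_hasDerivAt_rotation {v₁ v₂ ω : ℝ → ℝ}
    (hv₁ : ∀ t, HasDerivAt v₁ (v₂ t * ω t) t) (hv₂ : ∀ t, HasDerivAt v₂ (-(v₁ t) * ω t) t)
    (t : ℝ) : v₁ t ^ 2 + v₂ t ^ 2 = v₁ 0 ^ 2 + v₂ 0 ^ 2 := by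
  have hconst : ∀ s, HasDerivAt (fun s => v₁ s ^ 2 + v₂ s ^ 2) 0 s := fun s =>
    (((hv₁ s).pow 2).add ((hv₂ s).pow 2)).congr_deriv (by ring)
  exact eq_of_hasDerivAt_zero hconst t 0

theorem characteristic_gradB_drift_general
    (x₁ x₂ v₁ v₂ : ℝ → ℝ)
    (hx₂ : ∀ t, HasDerivAt x₂
      (v₂ t * (x₁ t - v₂ t) - (1 / 2) * ((v₁ t) ^ 2 + (v₂ t) ^ 2)) t)
    (hv₁ : ∀ t, HasDerivAt v₁ (v₂ t * (v₂ t - x₁ t)) t)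
    (hv₂ : ∀ t, HasDerivAt v₂ (-(v₁ t) * (v₂ t - x₁ t)) t) :
    ∀ t : ℝ, x₂ t + v₁ t
      = x₂ 0 + v₁ 0 - (t / 2) * ((v₁ 0) ^ 2 + (v₂ 0) ^ 2) := by
  have hspeed := sq_add_sq_eq_of_hasDerivAt_rotation (ω := fun t => v₂ t - x₁ t) hv₁ hv₂
  have hfall : ∀ t, HasDerivAt (fun t => x₂ t + v₁ t)
      (-(1 / 2) * ((v₁ 0) ^ 2 + (v₂ 0) ^ 2)) t := fun t =>
    ((hx₂ t).add (hv₁ t)).congr_deriv (by rw [← hspeed t]; ring)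
  intro t
  rw [eq_add_smul_of_hasDerivAt_const hfall t, smul_eq_mul]
  ring

/-- Along the characteristics of the limiting gyrokinetic equation (without
electric field), the motion in the `e₂` direction is a superposition of a
periodic motion and a uniform fall at speed `½|v(0)|²` (the `∇B` drift):
`x₂(t) + v₁(t) = x₂(0) + v₁(0) − (t/2)(v₁(0)² + v₂(0)²)`. -/
theorem characteristic_gradB_drift
    (x₁ x₂ v₁ v₂ : ℝ → ℝ)
    (hx₁ : ∀ t, HasDerivAt x₁ (-(v₁ t) * (v₂ t - x₁ t)) t)
    (hx₂ : ∀ t, HasDerivAt x₂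
      (v₂ t * (x₁ t - v₂ t) - (1 / 2) * ((v₁ t) ^ 2 + (v₂ t) ^ 2)) t)
    (hv₁ : ∀ t, HasDerivAt v₁ (v₂ t * (v₂ t - x₁ t)) t)
    (hv₂ : ∀ t, HasDerivAt v₂ (-(v₁ t) * (v₂ t - x₁ t)) t) :
    ∀ t : ℝ, x₂ t + v₁ t
      = x₂ 0 + v₁ 0 - (t / 2) * ((v₁ 0) ^ 2 + (v₂ 0) ^ 2) :=
  characteristic_gradB_drift_general x₁ x₂ v₁ v₂ hx₂ hv₁ hv₂
end

section
/- Let (ρ⁺, ρ⁻, V) be a classical solution of the bi-temperature drift-fluid system on [0, ∞). Then for all t ≥ 0: ‖ρ⁺(t) − μ^{good,+}‖²_{L²(Q)} − ‖ρ⁻(t) − μ^{good,−}‖²_{L²(Q)} = ‖ρ⁺(0) − μ^{good,+}‖²_{L²(Q)} − ‖ρ⁻(0) − μ^{good,−}‖²_{L²(Q)}; i.e. the difference of the squared L² distances of the hot and cold densities to their equilibrium profiles is a conserved quantity. -/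
open Real

/-- Time derivative of a function of `(t, x₁, x₂)`. -/
noncomputable def pt (f : ℝ → ℝ → ℝ → ℝ) (t x₁ x₂ : ℝ) : ℝ :=
  deriv (fun s => f s x₁ x₂) t

/-- Partial derivative in `x₁` of a function of `(t, x₁, x₂)`. -/
noncomputable def px1 (f : ℝ → ℝ → ℝ → ℝ) (t x₁ x₂ : ℝ) : ℝ :=
  deriv (fun y => f t y x₂) x₁

/-- Partial derivative in `x₂` of a function of `(t, x₁, x₂)`. -/
noncomputable def px2 (f : ℝ → ℝ → ℝ → ℝ) (t x₁ x₂ : ℝ) : ℝ :=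
  deriv (fun y => f t x₁ y) x₂

/-- A classical solution of the bi-temperature drift-fluid system on the time
interval `I`, posed on the strip `[0,L] × ℝ` with all unknowns `L`-periodic in
`x₂`: smooth functions `ρ⁺, ρ⁻, V` satisfying the transport equations
`∂ₜρ^± − T^± ∂_{x₂}ρ^± + E^⊥·∇ₓρ^± = 0` with `E = −∇ₓV`, `E^⊥ = (E₂, −E₁)`,
the Poisson equation `−ΔₓV = ρ⁺ + ρ⁻ − 1`, and the Dirichlet condition
`V = 0` on `x₁ = 0, L`. -/
def IsClassicalSolution (L Tp Tm : ℝ) (I : Set ℝ)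
    (ρp ρm V : ℝ → ℝ → ℝ → ℝ) : Prop :=
  ContDiff ℝ (⊤ : ℕ∞) (fun p : ℝ × ℝ × ℝ => ρp p.1 p.2.1 p.2.2) ∧
  ContDiff ℝ (⊤ : ℕ∞) (fun p : ℝ × ℝ × ℝ => ρm p.1 p.2.1 p.2.2) ∧
  ContDiff ℝ (⊤ : ℕ∞) (fun p : ℝ × ℝ × ℝ => V p.1 p.2.1 p.2.2) ∧
  (∀ t x₁ x₂ : ℝ, ρp t x₁ (x₂ + L) = ρp t x₁ x₂) ∧
  (∀ t x₁ x₂ : ℝ, ρm t x₁ (x₂ + L) = ρm t x₁ x₂) ∧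
  (∀ t x₁ x₂ : ℝ, V t x₁ (x₂ + L) = V t x₁ x₂) ∧
  (∀ t ∈ I, ∀ x₁ ∈ Set.Icc (0 : ℝ) L, ∀ x₂ : ℝ,
    pt ρp t x₁ x₂ - Tp * px2 ρp t x₁ x₂
      + ((-(px2 V t x₁ x₂)) * px1 ρp t x₁ x₂
          + px1 V t x₁ x₂ * px2 ρp t x₁ x₂) = 0) ∧
  (∀ t ∈ I, ∀ x₁ ∈ Set.Icc (0 : ℝ) L, ∀ x₂ : ℝ,
    pt ρm t x₁ x₂ - Tm * px2 ρm t x₁ x₂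
      + ((-(px2 V t x₁ x₂)) * px1 ρm t x₁ x₂
          + px1 V t x₁ x₂ * px2 ρm t x₁ x₂) = 0) ∧
  (∀ t ∈ I, ∀ x₁ ∈ Set.Icc (0 : ℝ) L, ∀ x₂ : ℝ,
    -(px1 (px1 V) t x₁ x₂ + px2 (px2 V) t x₁ x₂)
      = ρp t x₁ x₂ + ρm t x₁ x₂ - 1) ∧
  (∀ t ∈ I, ∀ x₂ : ℝ, V t 0 x₂ = 0 ∧ V t L x₂ = 0)

/-!
Write `a = ρ⁺ − x₁/L` and `b = ρ⁻ − (1 − x₁/L)`. The two transport equations, the Poisson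
equation (through `a + b = −ΔV`) and the symmetry `∂₁∂₂V = ∂₂∂₁V` give the pointwise
conservation law `∂ₜ(a² − b²) = ∂₁F₁ + ∂₂F₂` with fluxes
`F₁ = ∂₂V (a² − b² − (2/L) ∂₁V)` and `F₂ = T⁺a² − T⁻b² − ∂₁V (a² − b²) + ((∂₁V)² − (∂₂V)²)/L`.
`F₁` vanishes on `x₁ = 0, L`, where `V` and hence `∂₂V` vanish, and `F₂` is
`L`-periodic in `x₂`; so by the divergence theorem on the cell the time derivative of
`∫_Q (a² − b²)` is zero.
-/

open MeasureTheory Set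
open scoped ContDiff

abbrev uncurry3 (f : ℝ → ℝ → ℝ → ℝ) : ℝ × ℝ × ℝ → ℝ := fun p => f p.1 p.2.1 p.2.2

theorem Continuous.uncurry3_slice {f : ℝ → ℝ → ℝ → ℝ} (hf : Continuous (uncurry3 f)) (t : ℝ) :
    Continuous (Function.uncurry (f t)) :=
  hf.comp (continuous_const.prodMk continuous_id)

section PartialDerivatives

variable {f : ℝ → ℝ → ℝ → ℝ} {t x₁ x₂ : ℝ}

theorem hasDerivAt_pt_fderiv (hf : DifferentiableAt ℝ (uncurry3 f) (t, x₁, x₂)) :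
    HasDerivAt (fun s => f s x₁ x₂) (fderiv ℝ (uncurry3 f) (t, x₁, x₂) (1, 0, 0)) t :=
  hf.hasFDerivAt.comp_hasDerivAt (f := fun s => (s, x₁, x₂)) t
    ((hasDerivAt_id t).prodMk (hasDerivAt_const t _))

theorem hasDerivAt_px1_fderiv (hf : DifferentiableAt ℝ (uncurry3 f) (t, x₁, x₂)) :
    HasDerivAt (fun y => f t y x₂) (fderiv ℝ (uncurry3 f) (t, x₁, x₂) (0, 1, 0)) x₁ :=
  hf.hasFDerivAt.comp_hasDerivAt (f := fun y => (t, y, x₂)) x₁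
    ((hasDerivAt_const x₁ t).prodMk ((hasDerivAt_id x₁).prodMk (hasDerivAt_const x₁ x₂)))

theorem hasDerivAt_px2_fderiv (hf : DifferentiableAt ℝ (uncurry3 f) (t, x₁, x₂)) :
    HasDerivAt (fun y => f t x₁ y) (fderiv ℝ (uncurry3 f) (t, x₁, x₂) (0, 0, 1)) x₂ :=
  hf.hasFDerivAt.comp_hasDerivAt (f := fun y => (t, x₁, y)) x₂
    ((hasDerivAt_const x₂ t).prodMk ((hasDerivAt_const x₂ x₁).prodMk (hasDerivAt_id x₂)))

theorem hasDerivAt_pt (hf : DifferentiableAt ℝ (uncurry3 f) (t, x₁, x₂)) :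
    HasDerivAt (fun s => f s x₁ x₂) (pt f t x₁ x₂) t :=
  (hasDerivAt_pt_fderiv hf).differentiableAt.hasDerivAt

theorem hasDerivAt_px1 (hf : DifferentiableAt ℝ (uncurry3 f) (t, x₁, x₂)) :
    HasDerivAt (fun y => f t y x₂) (px1 f t x₁ x₂) x₁ :=
  (hasDerivAt_px1_fderiv hf).differentiableAt.hasDerivAt

theorem hasDerivAt_px2 (hf : DifferentiableAt ℝ (uncurry3 f) (t, x₁, x₂)) :
    HasDerivAt (fun y => f t x₁ y) (px2 f t x₁ x₂) x₂ :=
  (hasDerivAt_px2_fderiv hf).differentiableAt.hasDerivAt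

theorem uncurry3_pt_eq_fderiv (hf : Differentiable ℝ (uncurry3 f)) :
    uncurry3 (pt f) = fun p => fderiv ℝ (uncurry3 f) p (1, 0, 0) :=
  funext fun p => (hasDerivAt_pt_fderiv (hf p)).deriv

theorem uncurry3_px1_eq_fderiv (hf : Differentiable ℝ (uncurry3 f)) :
    uncurry3 (px1 f) = fun p => fderiv ℝ (uncurry3 f) p (0, 1, 0) :=
  funext fun p => (hasDerivAt_px1_fderiv (hf p)).deriv

theorem uncurry3_px2_eq_fderiv (hf : Differentiable ℝ (uncurry3 f)) :
    uncurry3 (px2 f) = fun p => fderiv ℝ (uncurry3 f) p (0, 0, 1) :=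
  funext fun p => (hasDerivAt_px2_fderiv (hf p)).deriv

variable {m n : WithTop ℕ∞}

theorem ContDiff.uncurry3_pt (hf : ContDiff ℝ n (uncurry3 f)) (hmn : m + 1 ≤ n) :
    ContDiff ℝ m (uncurry3 (pt f)) := by
  rw [uncurry3_pt_eq_fderiv (hf.differentiable fun h => by simp [h] at hmn)]
  exact (hf.fderiv_right hmn).clm_apply contDiff_const

theorem ContDiff.uncurry3_px1 (hf : ContDiff ℝ n (uncurry3 f)) (hmn : m + 1 ≤ n) :
    ContDiff ℝ m (uncurry3 (px1 f)) := by
  rw [uncurry3_px1_eq_fderiv (hf.differentiable fun h => by simp [h] at hmn)]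
  exact (hf.fderiv_right hmn).clm_apply contDiff_const

theorem ContDiff.uncurry3_px2 (hf : ContDiff ℝ n (uncurry3 f)) (hmn : m + 1 ≤ n) :
    ContDiff ℝ m (uncurry3 (px2 f)) := by
  rw [uncurry3_px2_eq_fderiv (hf.differentiable fun h => by simp [h] at hmn)]
  exact (hf.fderiv_right hmn).clm_apply contDiff_const

theorem px1_px2_comm (hf : ContDiff ℝ 2 (uncurry3 f)) :
    px1 (px2 f) t x₁ x₂ = px2 (px1 f) t x₁ x₂ := by
  have hdiff : Differentiable ℝ (uncurry3 f) := hf.differentiable two_ne_zero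
  have hD : Differentiable ℝ (fderiv ℝ (uncurry3 f)) :=
    (hf.fderiv_right (m := 1) le_rfl).differentiable one_ne_zero
  have h₁ := hasDerivAt_px1_fderiv
    ((hf.uncurry3_px2 (m := 1) le_rfl).differentiable one_ne_zero (t, x₁, x₂))
  have h₂ := hasDerivAt_px2_fderiv
    ((hf.uncurry3_px1 (m := 1) le_rfl).differentiable one_ne_zero (t, x₁, x₂))
  refine h₁.deriv.trans (Eq.trans ?_ h₂.deriv.symm)
  rw [uncurry3_px1_eq_fderiv hdiff, uncurry3_px2_eq_fderiv hdiff,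
    fderiv_clm_apply (hD _) (differentiableAt_const _),
    fderiv_clm_apply (hD _) (differentiableAt_const _)]
  simpa using (hf.contDiffAt (x := (t, x₁, x₂))).isSymmSndFDerivAt (by simp) (0, 1, 0) (0, 0, 1)

theorem px2_eq_zero_of_forall_eq_zero (h : ∀ y, f t x₁ y = 0) :
    px2 f t x₁ x₂ = 0 := by
  simp [px2, h]

theorem px1_periodic {c : ℝ} (h : ∀ t x₁ x₂, f t x₁ (x₂ + c) = f t x₁ x₂) :
    px1 f t x₁ (x₂ + c) = px1 f t x₁ x₂ := by
  simp only [px1, h]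

theorem px2_periodic {c : ℝ} (h : ∀ t x₁ x₂, f t x₁ (x₂ + c) = f t x₁ x₂) :
    px2 f t x₁ (x₂ + c) = px2 f t x₁ x₂ := by
  simp only [px2, ← deriv_comp_add_const, h]

end PartialDerivatives

section Integrals

variable {a₁ b₁ a₂ b₂ : ℝ}

theorem intervalIntegral_intervalIntegral_eq_setIntegral {g : ℝ → ℝ → ℝ}
    (hg : Continuous (Function.uncurry g)) (h₁ : a₁ ≤ b₁) (h₂ : a₂ ≤ b₂) :
    ∫ x in a₁..b₁, ∫ y in a₂..b₂, g x y = ∫ z in Icc a₁ b₁ ×ˢ Icc a₂ b₂, Function.uncurry g z := by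
  rw [Measure.volume_eq_prod,
    setIntegral_prod _ (hg.continuousOn.integrableOn_compact (isCompact_Icc.prod isCompact_Icc))]
  simp only [intervalIntegral.integral_of_le, h₁, h₂,
    setIntegral_congr_set (Ioc_ae_eq_Icc (α := ℝ) (μ := volume)), Function.uncurry_apply_pair]

theorem intervalIntegral_intervalIntegral_sub {f g : ℝ → ℝ → ℝ}
    (hf : Continuous (Function.uncurry f)) (hg : Continuous (Function.uncurry g)) :
    (∫ x in a₁..b₁, ∫ y in a₂..b₂, f x y) - ∫ x in a₁..b₁, ∫ y in a₂..b₂, g x y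
      = ∫ x in a₁..b₁, ∫ y in a₂..b₂, (f x y - g x y) := by
  have hint : ∀ {h : ℝ → ℝ → ℝ}, Continuous (Function.uncurry h) →
      IntervalIntegrable (fun x => ∫ y in a₂..b₂, h x y) volume a₁ b₁ := fun hh =>
    (intervalIntegral.continuous_parametric_intervalIntegral_of_continuous' hh _ _)
      |>.intervalIntegrable _ _
  rw [← intervalIntegral.integral_sub (hint hf) (hint hg)]
  refine intervalIntegral.integral_congr fun x _ => (intervalIntegral.integral_sub ?_ ?_).symm
  · exact (hf.comp (continuous_const.prodMk continuous_id)).intervalIntegrable _ _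
  · exact (hg.comp (continuous_const.prodMk continuous_id)).intervalIntegrable _ _

theorem hasDerivAt_setIntegral_of_contDiff {f : ℝ → ℝ → ℝ → ℝ}
    (hf : ContDiff ℝ 1 (uncurry3 f)) {K : Set (ℝ × ℝ)} (hK : IsCompact K) (t₀ : ℝ) :
    HasDerivAt (fun t => ∫ z in K, f t z.1 z.2) (∫ z in K, pt f t₀ z.1 z.2) t₀ := by
  have hpt : Continuous (uncurry3 (pt f)) := (hf.uncurry3_pt (m := 0) (by simp)).continuous
  obtain ⟨C, hC⟩ := (isCompact_Icc (a := t₀ - 1) (b := t₀ + 1)).prod hK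
    |>.exists_bound_of_continuousOn hpt.continuousOn
  have hbound : ∀ᵐ z ∂volume.restrict K, ∀ t ∈ Metric.ball t₀ 1, ‖pt f t z.1 z.2‖ ≤ C := by
    refine ae_restrict_of_forall_mem hK.measurableSet fun z hz t ht => hC (t, z) ⟨?_, hz⟩
    rw [Real.ball_eq_Ioo] at ht
    exact Ioo_subset_Icc_self ht
  exact (hasDerivAt_integral_of_dominated_loc_of_deriv_le (Metric.ball_mem_nhds t₀ one_pos)
    (.of_forall fun t => (hf.continuous.uncurry3_slice t).aestronglyMeasurable)
    ((hf.continuous.uncurry3_slice t₀).continuousOn.integrableOn_compact hK)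
    (hpt.uncurry3_slice t₀).aestronglyMeasurable hbound (integrableOn_const hK.measure_lt_top.ne)
    (.of_forall fun z t _ => hasDerivAt_pt (hf.differentiable one_ne_zero _))).2

theorem hasDerivAt_intervalIntegral_intervalIntegral {f : ℝ → ℝ → ℝ → ℝ}
    (hf : ContDiff ℝ 1 (uncurry3 f)) (h₁ : a₁ ≤ b₁) (h₂ : a₂ ≤ b₂) (t₀ : ℝ) :
    HasDerivAt (fun t => ∫ x in a₁..b₁, ∫ y in a₂..b₂, f t x y)
      (∫ x in a₁..b₁, ∫ y in a₂..b₂, pt f t₀ x y) t₀ := by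
  simp only [
    intervalIntegral_intervalIntegral_eq_setIntegral (hf.continuous.uncurry3_slice _) h₁ h₂,
    intervalIntegral_intervalIntegral_eq_setIntegral
      ((hf.uncurry3_pt (m := 0) (by simp)).continuous.uncurry3_slice _) h₁ h₂]
  exact hasDerivAt_setIntegral_of_contDiff hf (isCompact_Icc.prod isCompact_Icc) t₀

theorem intervalIntegral_intervalIntegral_px1_add_px2_eq_zero {P Q : ℝ → ℝ → ℝ → ℝ}
    (hP : ContDiff ℝ 1 (uncurry3 P)) (hQ : ContDiff ℝ 1 (uncurry3 Q)) (t : ℝ)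
    (hPb : ∀ y, P t b₁ y = P t a₁ y) (hQb : ∀ x, Q t x b₂ = Q t x a₂) :
    ∫ x in a₁..b₁, ∫ y in a₂..b₂, px1 P t x y + px2 Q t x y = 0 := by
  set P' : ℝ × ℝ → ℝ × ℝ →L[ℝ] ℝ := fun z =>
    (fderiv ℝ (uncurry3 P) (t, z)).comp (.inr ℝ ℝ (ℝ × ℝ))
  set Q' : ℝ × ℝ → ℝ × ℝ →L[ℝ] ℝ := fun z =>
    (fderiv ℝ (uncurry3 Q) (t, z)).comp (.inr ℝ ℝ (ℝ × ℝ))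
  have hP' : ∀ z, HasFDerivAt (Function.uncurry (P t)) (P' z) z := fun z =>
    (hP.differentiable one_ne_zero _).hasFDerivAt.comp z (hasFDerivAt_prodMk_right t z)
  have hQ' : ∀ z, HasFDerivAt (Function.uncurry (Q t)) (Q' z) z := fun z =>
    (hQ.differentiable one_ne_zero _).hasFDerivAt.comp z (hasFDerivAt_prodMk_right t z)
  have hdiv : ∀ x y, px1 P t x y + px2 Q t x y = P' (x, y) (1, 0) + Q' (x, y) (0, 1) :=
    fun x y => congrArg₂ (· + ·)
      (hasDerivAt_px1_fderiv (hP.differentiable one_ne_zero _)).deriv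
      (hasDerivAt_px2_fderiv (hQ.differentiable one_ne_zero _)).deriv
  have hcont : Continuous fun z => P' z (1, 0) + Q' z (0, 1) := by
    have hslice : Continuous fun z : ℝ × ℝ => (t, z) := continuous_const.prodMk continuous_id
    exact (((hP.continuous_fderiv one_ne_zero).comp hslice).clm_apply continuous_const).add
      (((hQ.continuous_fderiv one_ne_zero).comp hslice).clm_apply continuous_const)
  simp_rw [hdiv]
  rw [integral2_divergence_prod_of_hasFDerivAt _ _ P' Q' a₁ a₂ b₁ b₂
    (hP.continuous.uncurry3_slice t).continuousOn (hQ.continuous.uncurry3_slice t).continuousOn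
    (fun z _ => hP' z) (fun z _ => hQ' z)
    (hcont.continuousOn.integrableOn_compact (isCompact_uIcc.prod isCompact_uIcc))]
  simp [hPb, hQb]

end Integrals

noncomputable def enstrophyGap (L : ℝ) (ρp ρm : ℝ → ℝ → ℝ → ℝ) (t x₁ x₂ : ℝ) : ℝ :=
  (ρp t x₁ x₂ - x₁ / L) ^ 2 - (ρm t x₁ x₂ - (1 - x₁ / L)) ^ 2

noncomputable def enstrophyFlux₁ (L : ℝ) (ρp ρm V : ℝ → ℝ → ℝ → ℝ) (t x₁ x₂ : ℝ) : ℝ :=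
  px2 V t x₁ x₂ * (enstrophyGap L ρp ρm t x₁ x₂ - 2 / L * px1 V t x₁ x₂)

noncomputable def enstrophyFlux₂ (L Tp Tm : ℝ) (ρp ρm V : ℝ → ℝ → ℝ → ℝ) (t x₁ x₂ : ℝ) : ℝ :=
  Tp * (ρp t x₁ x₂ - x₁ / L) ^ 2 - Tm * (ρm t x₁ x₂ - (1 - x₁ / L)) ^ 2
    - px1 V t x₁ x₂ * enstrophyGap L ρp ρm t x₁ x₂
    + (px1 V t x₁ x₂ ^ 2 - px2 V t x₁ x₂ ^ 2) / L

section Enstrophy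

variable {n : WithTop ℕ∞} {L Tp Tm : ℝ} {ρp ρm V : ℝ → ℝ → ℝ → ℝ}

theorem ContDiff.uncurry3_enstrophyGap (hρp : ContDiff ℝ n (uncurry3 ρp))
    (hρm : ContDiff ℝ n (uncurry3 ρm)) : ContDiff ℝ n (uncurry3 (enstrophyGap L ρp ρm)) := by
  have hx₁ : ContDiff ℝ n fun p : ℝ × ℝ × ℝ => p.2.1 / L :=
    (contDiff_fst.comp contDiff_snd).div_const L
  exact ((hρp.sub hx₁).pow 2).sub ((hρm.sub (contDiff_const.sub hx₁)).pow 2)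

theorem ContDiff.uncurry3_enstrophyFlux₁ (hρp : ContDiff ℝ n (uncurry3 ρp))
    (hρm : ContDiff ℝ n (uncurry3 ρm)) (hV₁ : ContDiff ℝ n (uncurry3 (px1 V)))
    (hV₂ : ContDiff ℝ n (uncurry3 (px2 V))) :
    ContDiff ℝ n (uncurry3 (enstrophyFlux₁ L ρp ρm V)) :=
  hV₂.mul ((hρp.uncurry3_enstrophyGap hρm).sub (contDiff_const.mul hV₁))

theorem ContDiff.uncurry3_enstrophyFlux₂ (hρp : ContDiff ℝ n (uncurry3 ρp))
    (hρm : ContDiff ℝ n (uncurry3 ρm)) (hV₁ : ContDiff ℝ n (uncurry3 (px1 V)))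
    (hV₂ : ContDiff ℝ n (uncurry3 (px2 V))) :
    ContDiff ℝ n (uncurry3 (enstrophyFlux₂ L Tp Tm ρp ρm V)) := by
  have hx₁ : ContDiff ℝ n fun p : ℝ × ℝ × ℝ => p.2.1 / L :=
    (contDiff_fst.comp contDiff_snd).div_const L
  exact (((contDiff_const.mul ((hρp.sub hx₁).pow 2)).sub
    (contDiff_const.mul ((hρm.sub (contDiff_const.sub hx₁)).pow 2))).sub
    (hV₁.mul (hρp.uncurry3_enstrophyGap hρm))).add (((hV₁.pow 2).sub (hV₂.pow 2)).div_const L)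

theorem integral_enstrophyGap (hρp : Continuous (uncurry3 ρp)) (hρm : Continuous (uncurry3 ρm))
    (t a₁ b₁ a₂ b₂ : ℝ) :
    ∫ x₁ in a₁..b₁, ∫ x₂ in a₂..b₂, enstrophyGap L ρp ρm t x₁ x₂
      = (∫ x₁ in a₁..b₁, ∫ x₂ in a₂..b₂, (ρp t x₁ x₂ - x₁ / L) ^ 2)
        - ∫ x₁ in a₁..b₁, ∫ x₂ in a₂..b₂, (ρm t x₁ x₂ - (1 - x₁ / L)) ^ 2 := by
  have hρp' := hρp.uncurry3_slice t
  have hρm' := hρm.uncurry3_slice t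
  exact (intervalIntegral_intervalIntegral_sub (by fun_prop) (by fun_prop)).symm

end Enstrophy

namespace IsClassicalSolution

variable {L Tp Tm : ℝ} {I : Set ℝ} {ρp ρm V : ℝ → ℝ → ℝ → ℝ}

theorem contDiff_enstrophyGap (hsol : IsClassicalSolution L Tp Tm I ρp ρm V) :
    ContDiff ℝ ∞ (uncurry3 (enstrophyGap L ρp ρm)) :=
  let ⟨hρp, hρm, _⟩ := hsol
  hρp.uncurry3_enstrophyGap hρm

theorem contDiff_enstrophyFlux₁ (hsol : IsClassicalSolution L Tp Tm I ρp ρm V) :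
    ContDiff ℝ ∞ (uncurry3 (enstrophyFlux₁ L ρp ρm V)) :=
  let ⟨hρp, hρm, hV, _⟩ := hsol
  hρp.uncurry3_enstrophyFlux₁ hρm (hV.uncurry3_px1 (by simp)) (hV.uncurry3_px2 (by simp))

theorem contDiff_enstrophyFlux₂ (hsol : IsClassicalSolution L Tp Tm I ρp ρm V) :
    ContDiff ℝ ∞ (uncurry3 (enstrophyFlux₂ L Tp Tm ρp ρm V)) :=
  let ⟨hρp, hρm, hV, _⟩ := hsol
  hρp.uncurry3_enstrophyFlux₂ hρm (hV.uncurry3_px1 (by simp)) (hV.uncurry3_px2 (by simp))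

theorem enstrophyFlux₁_right_eq_left (hsol : IsClassicalSolution L Tp Tm I ρp ρm V) {t : ℝ}
    (ht : t ∈ I) (x₂ : ℝ) :
    enstrophyFlux₁ L ρp ρm V t L x₂ = enstrophyFlux₁ L ρp ρm V t 0 x₂ := by
  obtain ⟨-, -, -, -, -, -, -, -, -, hbc⟩ := hsol
  simp [enstrophyFlux₁, px2_eq_zero_of_forall_eq_zero fun y => (hbc t ht y).1,
    px2_eq_zero_of_forall_eq_zero fun y => (hbc t ht y).2]

theorem enstrophyFlux₂_periodic (hsol : IsClassicalSolution L Tp Tm I ρp ρm V) (t x₁ x₂ : ℝ) :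
    enstrophyFlux₂ L Tp Tm ρp ρm V t x₁ (x₂ + L) = enstrophyFlux₂ L Tp Tm ρp ρm V t x₁ x₂ := by
  obtain ⟨-, -, -, hperp, hperm, hperV, -⟩ := hsol
  simp only [enstrophyFlux₂, enstrophyGap, hperp, hperm, px1_periodic hperV, px2_periodic hperV]

theorem pt_enstrophyGap (hsol : IsClassicalSolution L Tp Tm I ρp ρm V) {t x₁ : ℝ} (ht : t ∈ I)
    (hx₁ : x₁ ∈ Icc 0 L) (x₂ : ℝ) :
    pt (enstrophyGap L ρp ρm) t x₁ x₂ =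
      px1 (enstrophyFlux₁ L ρp ρm V) t x₁ x₂ + px2 (enstrophyFlux₂ L Tp Tm ρp ρm V) t x₁ x₂ := by
  obtain ⟨hρp, hρm, hV, -, -, -, hp, hm, hpois, -⟩ := hsol
  have hp := hp t ht x₁ hx₁ x₂
  have hm := hm t ht x₁ hx₁ x₂
  have hpois := hpois t ht x₁ hx₁ x₂
  have hschwarz : px1 (px2 V) t x₁ x₂ = px2 (px1 V) t x₁ x₂ :=
    px1_px2_comm (hV.of_le (by norm_cast))
  have dρp := hρp.differentiable (by simp) (t, x₁, x₂)
  have dρm := hρm.differentiable (by simp) (t, x₁, x₂)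
  have dV₁ := (hV.uncurry3_px1 (m := ∞) (by simp)).differentiable (by simp) (t, x₁, x₂)
  have dV₂ := (hV.uncurry3_px2 (m := ∞) (by simp)).differentiable (by simp) (t, x₁, x₂)
  have dρp₁ : HasDerivAt (fun y => ρp t y x₂ - y / L) (px1 ρp t x₁ x₂ - 1 / L) x₁ :=
    (hasDerivAt_px1 dρp).sub ((hasDerivAt_id x₁).div_const L)
  have dρm₁ : HasDerivAt (fun y => ρm t y x₂ - (1 - y / L)) (px1 ρm t x₁ x₂ - (0 - 1 / L)) x₁ :=
    (hasDerivAt_px1 dρm).sub ((hasDerivAt_const x₁ 1).sub ((hasDerivAt_id x₁).div_const L))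
  have dρp₂ := (hasDerivAt_px2 dρp).sub_const (x₁ / L)
  have dρm₂ := (hasDerivAt_px2 dρm).sub_const (1 - x₁ / L)
  have eG : pt (enstrophyGap L ρp ρm) t x₁ x₂ = _ :=
    ((((hasDerivAt_pt dρp).sub_const (x₁ / L)).pow 2).sub
      (((hasDerivAt_pt dρm).sub_const (1 - x₁ / L)).pow 2)).deriv
  have eP : px1 (enstrophyFlux₁ L ρp ρm V) t x₁ x₂ = _ :=
    ((hasDerivAt_px1 dV₂).mul (((dρp₁.pow 2).sub (dρm₁.pow 2)).sub
      ((hasDerivAt_px1 dV₁).const_mul (2 / L)))).deriv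
  have eQ : px2 (enstrophyFlux₂ L Tp Tm ρp ρm V) t x₁ x₂ = _ :=
    (((((dρp₂.pow 2).const_mul Tp).sub ((dρm₂.pow 2).const_mul Tm)).sub
      ((hasDerivAt_px2 dV₁).mul ((dρp₂.pow 2).sub (dρm₂.pow 2)))).add
      ((((hasDerivAt_px2 dV₁).pow 2).sub ((hasDerivAt_px2 dV₂).pow 2)).div_const L)).deriv
  rw [eG, eP, eQ]
  simp only [Pi.sub_apply, Pi.pow_apply]
  set a := ρp t x₁ x₂ - x₁ / L
  set b := ρm t x₁ x₂ - (1 - x₁ / L)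
  linear_combination (2 * a) * hp - (2 * b) * hm - (2 / L * px2 V t x₁ x₂) * hpois
    - (a ^ 2 - b ^ 2 - 2 / L * px1 V t x₁ x₂) * hschwarz

theorem hasDerivAt_integral_enstrophyGap (hsol : IsClassicalSolution L Tp Tm I ρp ρm V)
    (hL : 0 ≤ L) {t : ℝ} (ht : t ∈ I) :
    HasDerivAt (fun t => ∫ x₁ in (0 : ℝ)..L, ∫ x₂ in (0 : ℝ)..L, enstrophyGap L ρp ρm t x₁ x₂)
      0 t := by
  have hdiv : ∫ x₁ in (0 : ℝ)..L, ∫ x₂ in (0 : ℝ)..L, pt (enstrophyGap L ρp ρm) t x₁ x₂ = 0 := by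
    rw [intervalIntegral.integral_congr fun x₁ hx₁ => intervalIntegral.integral_congr fun x₂ _ =>
      hsol.pt_enstrophyGap ht (uIcc_of_le hL ▸ hx₁) x₂]
    exact intervalIntegral_intervalIntegral_px1_add_px2_eq_zero
      (hsol.contDiff_enstrophyFlux₁.of_le (by simp)) (hsol.contDiff_enstrophyFlux₂.of_le (by simp))
      t (hsol.enstrophyFlux₁_right_eq_left ht)
      (fun x₁ => by simpa only [zero_add] using hsol.enstrophyFlux₂_periodic t x₁ 0)
  exact (hasDerivAt_intervalIntegral_intervalIntegral
    (hsol.contDiff_enstrophyGap.of_le (by simp)) hL hL t).congr_deriv hdiv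

end IsClassicalSolution

theorem difference_of_enstrophies_conserved_general
    (L Tp Tm : ℝ) (hL : 0 < L)
    (ρp ρm V : ℝ → ℝ → ℝ → ℝ)
    (hsol : IsClassicalSolution L Tp Tm (Set.Ici 0) ρp ρm V) :
    ∀ t : ℝ, 0 ≤ t →
      ((∫ x₁ in (0 : ℝ)..L, ∫ x₂ in (0 : ℝ)..L, (ρp t x₁ x₂ - x₁ / L) ^ 2)
        - ∫ x₁ in (0 : ℝ)..L, ∫ x₂ in (0 : ℝ)..L,
            (ρm t x₁ x₂ - (1 - x₁ / L)) ^ 2)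
      = ((∫ x₁ in (0 : ℝ)..L, ∫ x₂ in (0 : ℝ)..L, (ρp 0 x₁ x₂ - x₁ / L) ^ 2)
        - ∫ x₁ in (0 : ℝ)..L, ∫ x₂ in (0 : ℝ)..L,
            (ρm 0 x₁ x₂ - (1 - x₁ / L)) ^ 2) := by
  intro t ht
  have hderiv := fun s (hs : s ∈ Ici (0 : ℝ)) => hsol.hasDerivAt_integral_enstrophyGap hL.le hs
  rw [← integral_enstrophyGap hsol.1.continuous hsol.2.1.continuous,
    ← integral_enstrophyGap hsol.1.continuous hsol.2.1.continuous]
  exact constant_of_has_deriv_right_zero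
    (fun s hs => (hderiv s hs.1).continuousAt.continuousWithinAt)
    (fun s hs => (hderiv s hs.1).hasDerivWithinAt) t ⟨ht, le_rfl⟩

/-- For any classical solution of the bi-temperature drift-fluid system on
`[0,∞)`, the difference of the squared `L²(Q)` distances of the hot and cold
densities to the good-curvature equilibrium profiles
`μ^{good} = (x₁/L, 1 − x₁/L)` is conserved in time. -/
theorem difference_of_enstrophies_conserved
    (L Tp Tm : ℝ) (hL : 0 < L) (hTm : 0 < Tm) (hT : Tm < Tp)
    (ρp ρm V : ℝ → ℝ → ℝ → ℝ)
    (hsol : IsClassicalSolution L Tp Tm (Set.Ici 0) ρp ρm V) :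
    ∀ t : ℝ, 0 ≤ t →
      ((∫ x₁ in (0 : ℝ)..L, ∫ x₂ in (0 : ℝ)..L, (ρp t x₁ x₂ - x₁ / L) ^ 2)
        - ∫ x₁ in (0 : ℝ)..L, ∫ x₂ in (0 : ℝ)..L,
            (ρm t x₁ x₂ - (1 - x₁ / L)) ^ 2)
      = ((∫ x₁ in (0 : ℝ)..L, ∫ x₂ in (0 : ℝ)..L, (ρp 0 x₁ x₂ - x₁ / L) ^ 2)
        - ∫ x₁ in (0 : ℝ)..L, ∫ x₂ in (0 : ℝ)..L,
            (ρm 0 x₁ x₂ - (1 - x₁ / L)) ^ 2) :=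
  difference_of_enstrophies_conserved_general L Tp Tm hL ρp ρm V hsol
end
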